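/- Let p = Δ*θ₀ + ω₀ with E[zω₀] = 0 and A_zz = E[zz'] positive definite. For observed markup vector Δ (possibly ≠ Δ*), define for each θ the population moment 𝑔(θ) = E[z(p − Δ'θ)] and 𝒬(θ) = 𝑔(θ)'A_zz⁻¹𝑔(θ). Then 𝒬(θₘ) = E[(Δ̃*₀ − Δ̃ₘ)²], where Δ̃*₀ = z'A_zz⁻¹E[zΔ*']θ₀ and Δ̃ₘ = z'A_zz⁻¹E[zΔ']θₘ. -/

import Mathlib

/-!
Since `E[z ω₀] = 0`, the moment vector is `g = E[zΔ*']θ₀ - E[zΔ']θₘ`, and the difference of the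
projected markups is `z'a` with `a = A_zz⁻¹ g`. Expanding the square,
`E[(z'a)²] = a'A_zz a = g'A_zz⁻¹ g`.
-/

open MeasureTheory Matrix

namespace MeasureTheory

variable {Ω ι κ : Type*} [MeasurableSpace Ω] {μ : Measure Ω} [Fintype κ]

noncomputable def crossMoment (μ : Measure Ω) (z : Ω → ι → ℝ) (X : Ω → κ → ℝ) : Matrix ι κ ℝ :=
  of fun i k => ∫ ω, z ω i * X ω k ∂μ

lemma memLp_dotProduct {p : ENNReal} {X : Ω → κ → ℝ} (hX : ∀ k, MemLp (fun ω => X ω k) p μ)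
    (c : κ → ℝ) : MemLp (fun ω => X ω ⬝ᵥ c) p μ :=
  memLp_finsetSum _ fun k _ => (hX k).mul_const (c k)

lemma integrable_mul_dotProduct {f : Ω → ℝ} {X : Ω → κ → ℝ}
    (hfX : ∀ k, Integrable (fun ω => f ω * X ω k) μ) (c : κ → ℝ) :
    Integrable (fun ω => f ω * (X ω ⬝ᵥ c)) μ := by
  simpa only [dotProduct, Finset.mul_sum, ← mul_assoc] using
    integrable_finsetSum _ fun k _ => (hfX k).mul_const (c k)

lemma integral_mul_dotProduct {f : Ω → ℝ} {X : Ω → κ → ℝ}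
    (hfX : ∀ k, Integrable (fun ω => f ω * X ω k) μ) (c : κ → ℝ) :
    ∫ ω, f ω * (X ω ⬝ᵥ c) ∂μ = (fun k => ∫ ω, f ω * X ω k ∂μ) ⬝ᵥ c := by
  simp only [dotProduct, Finset.mul_sum, ← mul_assoc]
  rw [integral_finsetSum _ fun k _ => (hfX k).mul_const (c k)]
  simp only [integral_mul_const]

lemma integral_mul_dotProduct_eq_crossMoment_mulVec {z : Ω → ι → ℝ} {X : Ω → κ → ℝ}
    (hzX : ∀ i k, Integrable (fun ω => z ω i * X ω k) μ) (c : κ → ℝ) (i : ι) :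
    ∫ ω, z ω i * (X ω ⬝ᵥ c) ∂μ = (crossMoment μ z X *ᵥ c) i :=
  integral_mul_dotProduct (hzX i) c

lemma integral_dotProduct_sq [Fintype ι] {z : Ω → ι → ℝ} (hz : ∀ i, MemLp (fun ω => z ω i) 2 μ)
    (a : ι → ℝ) : ∫ ω, (z ω ⬝ᵥ a) ^ 2 ∂μ = a ⬝ᵥ (crossMoment μ z z *ᵥ a) := by
  have hza := memLp_dotProduct hz a
  simp only [sq]
  rw [integral_mul_dotProduct (fun i => hza.integrable_mul (hz i)), dotProduct_comm]
  congr 1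
  funext i
  simp only [mul_comm _ (z _ i)]
  exact integral_mul_dotProduct_eq_crossMoment_mulVec
    (fun i j => (hz i).integrable_mul (hz j)) a i

lemma integral_mul_sub_dotProduct_of_linear_model {z : Ω → ι → ℝ} {X Y : Ω → κ → ℝ}
    {p u : Ω → ℝ} {θ₀ : κ → ℝ} (hmodel : ∀ ω, p ω = X ω ⬝ᵥ θ₀ + u ω)
    (hexog : ∀ i, ∫ ω, z ω i * u ω ∂μ = 0)
    (hzX : ∀ i k, Integrable (fun ω => z ω i * X ω k) μ)
    (hzY : ∀ i k, Integrable (fun ω => z ω i * Y ω k) μ)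
    (hzu : ∀ i, Integrable (fun ω => z ω i * u ω) μ) (θ : κ → ℝ) (i : ι) :
    ∫ ω, z ω i * (p ω - Y ω ⬝ᵥ θ) ∂μ = (crossMoment μ z X *ᵥ θ₀ - crossMoment μ z Y *ᵥ θ) i := by
  have hzXθ₀ := integrable_mul_dotProduct (hzX i) θ₀
  have hzYθ := integrable_mul_dotProduct (hzY i) θ
  have hexpand : (fun ω => z ω i * (p ω - Y ω ⬝ᵥ θ)) =
      fun ω => (z ω i * (X ω ⬝ᵥ θ₀) + z ω i * u ω) - z ω i * (Y ω ⬝ᵥ θ) := by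
    funext ω; rw [hmodel ω]; ring
  rw [hexpand, integral_sub (f := fun ω => z ω i * (X ω ⬝ᵥ θ₀) + z ω i * u ω)
    (hzXθ₀.add (hzu i)) hzYθ, integral_add hzXθ₀ (hzu i), hexog i,
    add_zero, integral_mul_dotProduct_eq_crossMoment_mulVec hzX,
    integral_mul_dotProduct_eq_crossMoment_mulVec hzY, Pi.sub_apply]

end MeasureTheory

lemma Matrix.dotProduct_inv_mulVec_eq {n α : Type*} [Fintype n] [DecidableEq n] [CommRing α]
    {A : Matrix n n α} (hA : IsUnit A) (v : n → α) :
    v ⬝ᵥ (A⁻¹ *ᵥ v) = (A⁻¹ *ᵥ v) ⬝ᵥ (A *ᵥ (A⁻¹ *ᵥ v)) := by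
  rw [mulVec_mulVec, mul_nonsing_inv A ((isUnit_iff_isUnit_det A).mp hA), one_mulVec,
    dotProduct_comm]

theorem stmt_8_general {Ω : Type*} [MeasurableSpace Ω] (μ : Measure Ω)
    {d : ℕ} (z : Ω → Fin d → ℝ) (Δstar Δ : Ω → Fin 2 → ℝ)
    (p ω₀ : Ω → ℝ) (θ₀ θₘ : Fin 2 → ℝ)
    (hz : ∀ i, MemLp (fun ω => z ω i) 2 μ)
    (hΔstar : ∀ k, MemLp (fun ω => Δstar ω k) 2 μ)
    (hΔ : ∀ k, MemLp (fun ω => Δ ω k) 2 μ)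
    (hp : MemLp p 2 μ)
    (hmodel : ∀ ω, p ω = Δstar ω ⬝ᵥ θ₀ + ω₀ ω)
    (hexog : ∀ i, ∫ ω, z ω i * ω₀ ω ∂μ = 0)
    (Azz : Matrix (Fin d) (Fin d) ℝ)
    (hAzz : Azz = Matrix.of fun i j => ∫ ω, z ω i * z ω j ∂μ)
    (hpos : Azz.PosDef)
    (g : Fin d → ℝ)
    (hg : g = fun i => ∫ ω, z ω i * (p ω - Δ ω ⬝ᵥ θₘ) ∂μ)
    (Q : ℝ) (hQ : Q = g ⬝ᵥ (Azz⁻¹ *ᵥ g))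
    (Δt₀ Δtₘ : Ω → ℝ)
    (hΔt₀ : Δt₀ = fun ω =>
      z ω ⬝ᵥ (Azz⁻¹ *ᵥ ((Matrix.of fun i k => ∫ ω', z ω' i * Δstar ω' k ∂μ) *ᵥ θ₀)))
    (hΔtₘ : Δtₘ = fun ω =>
      z ω ⬝ᵥ (Azz⁻¹ *ᵥ ((Matrix.of fun i k => ∫ ω', z ω' i * Δ ω' k ∂μ) *ᵥ θₘ))) :
    Q = ∫ ω, (Δt₀ ω - Δtₘ ω) ^ 2 ∂μ := by
  have hω₀ : MemLp ω₀ 2 μ := by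
    have : ω₀ = fun ω => p ω - Δstar ω ⬝ᵥ θ₀ := funext fun ω => by rw [hmodel ω]; ring
    exact this ▸ hp.sub (memLp_dotProduct hΔstar θ₀)
  set v := crossMoment μ z Δstar *ᵥ θ₀ - crossMoment μ z Δ *ᵥ θₘ
  have hgv : g = v := hg ▸ funext fun i =>
    integral_mul_sub_dotProduct_of_linear_model hmodel hexog
      (fun i k => (hz i).integrable_mul (hΔstar k)) (fun i k => (hz i).integrable_mul (hΔ k))
      (fun i => (hz i).integrable_mul hω₀) θₘ i
  have hdiff : ∀ ω, Δt₀ ω - Δtₘ ω = z ω ⬝ᵥ (Azz⁻¹ *ᵥ v) := fun ω => by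
    rw [hΔt₀, hΔtₘ, mulVec_sub, dotProduct_sub]; rfl
  have hAzz' : Azz = crossMoment μ z z := hAzz
  simp only [hdiff]
  rw [hQ, hgv, dotProduct_inv_mulVec_eq hpos.isUnit, integral_dotProduct_sq hz, hAzz']

/-- With `p = Δ*'θ₀ + ω₀`, `E[zω₀] = 0`, moment function
`𝑔(θ) = E[z(p − Δ'θ)]` and GMM fit `𝒬(θ) = 𝑔(θ)'A_zz⁻¹𝑔(θ)`, we have
`𝒬(θₘ) = E[(Δ̃*₀ − Δ̃ₘ)²]` for the projected (predicted) markups. -/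
theorem stmt_8 {Ω : Type*} [MeasurableSpace Ω] (μ : Measure Ω) [IsProbabilityMeasure μ]
    {d : ℕ} (z : Ω → Fin d → ℝ) (Δstar Δ : Ω → Fin 2 → ℝ)
    (p ω₀ : Ω → ℝ) (θ₀ θₘ : Fin 2 → ℝ)
    (hz : ∀ i, MemLp (fun ω => z ω i) 2 μ)
    (hΔstar : ∀ k, MemLp (fun ω => Δstar ω k) 2 μ)
    (hΔ : ∀ k, MemLp (fun ω => Δ ω k) 2 μ)
    (hp : MemLp p 2 μ)
    (hmodel : ∀ ω, p ω = Δstar ω ⬝ᵥ θ₀ + ω₀ ω)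
    (hexog : ∀ i, ∫ ω, z ω i * ω₀ ω ∂μ = 0)
    (Azz : Matrix (Fin d) (Fin d) ℝ)
    (hAzz : Azz = Matrix.of fun i j => ∫ ω, z ω i * z ω j ∂μ)
    (hpos : Azz.PosDef)
    (g : Fin d → ℝ)
    (hg : g = fun i => ∫ ω, z ω i * (p ω - Δ ω ⬝ᵥ θₘ) ∂μ)
    (Q : ℝ) (hQ : Q = g ⬝ᵥ (Azz⁻¹ *ᵥ g))
    (Δt₀ Δtₘ : Ω → ℝ)
    (hΔt₀ : Δt₀ = fun ω =>
      z ω ⬝ᵥ (Azz⁻¹ *ᵥ ((Matrix.of fun i k => ∫ ω', z ω' i * Δstar ω' k ∂μ) *ᵥ θ₀)))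
    (hΔtₘ : Δtₘ = fun ω =>
      z ω ⬝ᵥ (Azz⁻¹ *ᵥ ((Matrix.of fun i k => ∫ ω', z ω' i * Δ ω' k ∂μ) *ᵥ θₘ))) :
    Q = ∫ ω, (Δt₀ ω - Δtₘ ω) ^ 2 ∂μ :=
  stmt_8_general μ z Δstar Δ p ω₀ θ₀ θₘ hz hΔstar hΔ hp hmodel hexog Azz hAzz hpos g hg Q hQ Δt₀ Δtₘ
    hΔt₀ hΔtₘ
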